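/- Let 0 ≤ s < η < e ≤ T be integers and let p(s+1),…,p(e) be a sequence in a real inner product space with p(t) = P₁ for s < t ≤ η and p(t) = P₂ for η < t ≤ e. Then the map t ↦ ‖p̃^{s,e}(t)‖² is nondecreasing on integers t ∈ (s, η] and nonincreasing on integers t ∈ [η, e); in particular ‖p̃^{s,e}(t)‖ ≤ ‖p̃^{s,e}(η)‖ for all s < t < e, i.e. the population CUSUM norm is maximized at the true change point η. -/

import Mathlib

open scoped BigOperators

/-- CUSUM weights `ω_{s,e}^t(u)`. -/
noncomputable def cusumW (s e t u : ℕ) : ℝ :=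
  if u ≤ t then Real.sqrt (((e : ℝ) - t) / (((e : ℝ) - s) * ((t : ℝ) - s)))
  else - Real.sqrt (((t : ℝ) - s) / (((e : ℝ) - s) * ((e : ℝ) - t)))

/-- CUSUM statistic `B̃^{s,e}(t)` of a sequence in a real vector space. -/
noncomputable def cusum {V : Type*} [AddCommGroup V] [Module ℝ V]
    (B : ℕ → V) (s e t : ℕ) : V :=
  ∑ u ∈ Finset.Ioc s e, cusumW s e t u • B u

/-!
On a sequence that is constant on `(s, η]` and on `(η, e]`, the CUSUM weights at any
`s ≤ t ≤ e` sum to zero, so the statistic only sees the jump: it equals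
`(∑_{s < u ≤ η} ω_{s,e}^t(u)) • (P₁ - P₂)`. That coefficient is
`(e - η) √((t - s) / ((e - s)(e - t)))` for `t ≤ η` and
`(η - s) √((e - t) / ((e - s)(t - s)))` for `t ≥ η`, increasing resp. decreasing in `t`.
-/

lemma mul_sqrt_div_mul_self {n : ℝ} (hn : 0 ≤ n) (m N : ℝ) :
    n * √(m / (N * n)) = √(n * m / N) := by
  rcases hn.eq_or_lt with rfl | hn
  · simp
  rw [← Real.sqrt_sq hn.le, ← Real.sqrt_mul (sq_nonneg n), Real.sqrt_sq hn.le]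
  congr 1
  field_simp

lemma sum_Ioc_const_eq_mul {a b : ℕ} (hab : a ≤ b) (c : ℝ) :
    ∑ _u ∈ Finset.Ioc a b, c = ((b : ℝ) - a) * c := by
  rw [Finset.sum_const, Nat.card_Ioc, nsmul_eq_mul, Nat.cast_sub hab]

lemma sum_cusumW_Ioc_of_le {s e t a b : ℕ} (hab : a ≤ b) (hbt : b ≤ t) :
    ∑ u ∈ Finset.Ioc a b, cusumW s e t u
      = ((b : ℝ) - a) * √(((e : ℝ) - t) / (((e : ℝ) - s) * ((t : ℝ) - s))) := by
  rw [← sum_Ioc_const_eq_mul hab]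
  exact Finset.sum_congr rfl fun u hu => if_pos ((Finset.mem_Ioc.1 hu).2.trans hbt)

lemma sum_cusumW_Ioc_of_ge {s e t a b : ℕ} (hta : t ≤ a) (hab : a ≤ b) :
    ∑ u ∈ Finset.Ioc a b, cusumW s e t u
      = -(((b : ℝ) - a) * √(((t : ℝ) - s) / (((e : ℝ) - s) * ((e : ℝ) - t)))) := by
  rw [← mul_neg, ← sum_Ioc_const_eq_mul hab]
  refine Finset.sum_congr rfl fun u hu => if_neg ?_
  have := (Finset.mem_Ioc.1 hu).1
  omega

lemma sum_cusumW_eq_zero {s e t : ℕ} (hst : s ≤ t) (hte : t ≤ e) :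
    ∑ u ∈ Finset.Ioc s e, cusumW s e t u = 0 := by
  have hts : (0 : ℝ) ≤ (t : ℝ) - s := sub_nonneg.2 (by exact_mod_cast hst)
  have het : (0 : ℝ) ≤ (e : ℝ) - t := sub_nonneg.2 (by exact_mod_cast hte)
  rw [← Finset.sum_Ioc_consecutive _ hst hte, sum_cusumW_Ioc_of_le hst le_rfl,
    sum_cusumW_Ioc_of_ge le_rfl hte, mul_sqrt_div_mul_self hts, mul_sqrt_div_mul_self het,
    mul_comm ((e : ℝ) - t), add_neg_cancel]

section PiecewiseConstant

variable {V : Type*} [AddCommGroup V] [Module ℝ V] {p : ℕ → V} {P₁ P₂ : V} {s η e t : ℕ}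

lemma cusum_eq_smul_of_piecewise_const (hsη : s ≤ η) (hηe : η ≤ e) (hst : s ≤ t) (hte : t ≤ e)
    (h1 : ∀ t, s < t → t ≤ η → p t = P₁) (h2 : ∀ t, η < t → t ≤ e → p t = P₂) :
    cusum p s e t = (∑ u ∈ Finset.Ioc s η, cusumW s e t u) • (P₁ - P₂) := by
  have hzero := sum_cusumW_eq_zero hst hte
  rw [← Finset.sum_Ioc_consecutive _ hsη hηe] at hzero
  have hP₁ : ∑ u ∈ Finset.Ioc s η, cusumW s e t u • p u
      = (∑ u ∈ Finset.Ioc s η, cusumW s e t u) • P₁ := by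
    rw [Finset.sum_smul]
    refine Finset.sum_congr rfl fun u hu => ?_
    rw [h1 u (Finset.mem_Ioc.1 hu).1 (Finset.mem_Ioc.1 hu).2]
  have hP₂ : ∑ u ∈ Finset.Ioc η e, cusumW s e t u • p u
      = (∑ u ∈ Finset.Ioc η e, cusumW s e t u) • P₂ := by
    rw [Finset.sum_smul]
    refine Finset.sum_congr rfl fun u hu => ?_
    rw [h2 u (Finset.mem_Ioc.1 hu).1 (Finset.mem_Ioc.1 hu).2]
  rw [cusum, ← Finset.sum_Ioc_consecutive _ hsη hηe, hP₁, hP₂, eq_neg_of_add_eq_zero_right hzero,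
    neg_smul, smul_sub, sub_eq_add_neg]

lemma cusum_of_le_change_point (hsη : s ≤ η) (hηe : η ≤ e) (hst : s ≤ t) (htη : t ≤ η)
    (h1 : ∀ t, s < t → t ≤ η → p t = P₁) (h2 : ∀ t, η < t → t ≤ e → p t = P₂) :
    cusum p s e t
      = (((e : ℝ) - η) * √(((t : ℝ) - s) / (((e : ℝ) - s) * ((e : ℝ) - t)))) • (P₁ - P₂) := by
  have hte := htη.trans hηe
  have hzero := sum_cusumW_eq_zero hst hte
  rw [← Finset.sum_Ioc_consecutive _ hsη hηe, sum_cusumW_Ioc_of_ge htη hηe] at hzero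
  rw [cusum_eq_smul_of_piecewise_const hsη hηe hst hte h1 h2, add_neg_eq_zero.1 hzero]

lemma cusum_of_change_point_le (hsη : s ≤ η) (hηe : η ≤ e) (hηt : η ≤ t) (hte : t ≤ e)
    (h1 : ∀ t, s < t → t ≤ η → p t = P₁) (h2 : ∀ t, η < t → t ≤ e → p t = P₂) :
    cusum p s e t
      = (((η : ℝ) - s) * √(((e : ℝ) - t) / (((e : ℝ) - s) * ((t : ℝ) - s)))) • (P₁ - P₂) := by
  rw [cusum_eq_smul_of_piecewise_const hsη hηe (hsη.trans hηt) hte h1 h2,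
    sum_cusumW_Ioc_of_le hsη hηt]

end PiecewiseConstant

lemma sqrt_div_mul_sub_mono {s e t₁ t₂ : ℝ} (hst₁ : s ≤ t₁) (ht : t₁ ≤ t₂) (ht₂e : t₂ < e) :
    √((t₁ - s) / ((e - s) * (e - t₁))) ≤ √((t₂ - s) / ((e - s) * (e - t₂))) := by
  refine Real.sqrt_le_sqrt (div_le_div₀ (by linarith) (by linarith) ?_ ?_)
  · exact mul_pos (by linarith) (by linarith)
  · exact mul_le_mul_of_nonneg_left (by linarith) (by linarith)

lemma sqrt_div_mul_sub_anti {s e t₁ t₂ : ℝ} (hst₁ : s < t₁) (ht : t₁ ≤ t₂) (ht₂e : t₂ ≤ e) :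
    √((e - t₂) / ((e - s) * (t₂ - s))) ≤ √((e - t₁) / ((e - s) * (t₁ - s))) := by
  refine Real.sqrt_le_sqrt (div_le_div₀ (by linarith) (by linarith) ?_ ?_)
  · exact mul_pos (by linarith) (by linarith)
  · exact mul_le_mul_of_nonneg_left (by linarith) (by linarith)

section Norm

variable {E : Type*} [NormedAddCommGroup E] [NormedSpace ℝ E] {p : ℕ → E} {P₁ P₂ : E} {s η e : ℕ}

lemma monotoneOn_norm_cusum_Ioc (hηe : η < e)
    (h1 : ∀ t, s < t → t ≤ η → p t = P₁) (h2 : ∀ t, η < t → t ≤ e → p t = P₂) :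
    MonotoneOn (fun t => ‖cusum p s e t‖) (Set.Ioc s η) := by
  rintro t₁ ⟨hst₁, ht₁η⟩ t₂ ⟨hst₂, ht₂η⟩ ht
  have hsη := hst₁.le.trans ht₁η
  have hηe' : (0 : ℝ) ≤ (e : ℝ) - η := sub_nonneg.2 (by exact_mod_cast hηe.le)
  dsimp only
  rw [cusum_of_le_change_point hsη hηe.le hst₁.le ht₁η h1 h2,
    cusum_of_le_change_point hsη hηe.le hst₂.le ht₂η h1 h2, norm_smul, norm_smul]
  refine mul_le_mul_of_nonneg_right (abs_le_abs_of_nonneg (by positivity) ?_) (norm_nonneg _)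
  refine mul_le_mul_of_nonneg_left (sqrt_div_mul_sub_mono ?_ ?_ ?_) hηe'
  all_goals exact_mod_cast (by omega)

lemma antitoneOn_norm_cusum_Ico (hsη : s < η)
    (h1 : ∀ t, s < t → t ≤ η → p t = P₁) (h2 : ∀ t, η < t → t ≤ e → p t = P₂) :
    AntitoneOn (fun t => ‖cusum p s e t‖) (Set.Ico η e) := by
  rintro t₁ ⟨hηt₁, ht₁e⟩ t₂ ⟨hηt₂, ht₂e⟩ ht
  have hηe := hηt₁.trans ht₁e.le
  have hsη' : (0 : ℝ) ≤ (η : ℝ) - s := sub_nonneg.2 (by exact_mod_cast hsη.le)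
  dsimp only
  rw [cusum_of_change_point_le hsη.le hηe hηt₁ ht₁e.le h1 h2,
    cusum_of_change_point_le hsη.le hηe hηt₂ ht₂e.le h1 h2, norm_smul, norm_smul]
  refine mul_le_mul_of_nonneg_right (abs_le_abs_of_nonneg (by positivity) ?_) (norm_nonneg _)
  refine mul_le_mul_of_nonneg_left (sqrt_div_mul_sub_anti ?_ ?_ ?_) hsη'
  all_goals exact_mod_cast (by omega)

end Norm

theorem cusum_maximized_at_change_point_general
    {E : Type*} [NormedAddCommGroup E] [InnerProductSpace ℝ E]
    (s η e : ℕ) (hsη : s < η) (hηe : η < e)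
    (p : ℕ → E) (P₁ P₂ : E)
    (h1 : ∀ t, s < t → t ≤ η → p t = P₁)
    (h2 : ∀ t, η < t → t ≤ e → p t = P₂) :
    (∀ t₁ t₂, s < t₁ → t₁ ≤ t₂ → t₂ ≤ η →
      ‖cusum p s e t₁‖ ^ 2 ≤ ‖cusum p s e t₂‖ ^ 2) ∧
    (∀ t₁ t₂, η ≤ t₁ → t₁ ≤ t₂ → t₂ < e →
      ‖cusum p s e t₂‖ ^ 2 ≤ ‖cusum p s e t₁‖ ^ 2) ∧
    (∀ t, s < t → t < e → ‖cusum p s e t‖ ≤ ‖cusum p s e η‖) := by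
  have hmono := monotoneOn_norm_cusum_Ioc hηe h1 h2
  have hanti := antitoneOn_norm_cusum_Ico hsη h1 h2
  refine ⟨fun t₁ t₂ hst₁ ht ht₂η => ?_, fun t₁ t₂ hηt₁ ht ht₂e => ?_, fun t hst hte => ?_⟩
  · exact pow_le_pow_left₀ (norm_nonneg _)
      (hmono ⟨hst₁, ht.trans ht₂η⟩ ⟨hst₁.trans_le ht, ht₂η⟩ ht) 2
  · exact pow_le_pow_left₀ (norm_nonneg _)
      (hanti ⟨hηt₁, ht.trans_lt ht₂e⟩ ⟨hηt₁.trans ht, ht₂e⟩ ht) 2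
  rcases le_total t η with htη | hηt
  · exact hmono ⟨hst, htη⟩ ⟨hsη, le_rfl⟩ htη
  · exact hanti ⟨le_rfl, hηe⟩ ⟨hηt, hte⟩ hηt

/-- **Lemma (the population CUSUM norm is maximized at the change point).**
For a sequence in a real inner product space equal to `P₁` on `(s, η]` and `P₂`
on `(η, e]`, the map `t ↦ ‖p̃^{s,e}(t)‖²` is nondecreasing on `(s, η]` and
nonincreasing on `[η, e)`; in particular `‖p̃^{s,e}(t)‖ ≤ ‖p̃^{s,e}(η)‖` for all
`s < t < e`. -/
theorem cusum_maximized_at_change_point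
    {E : Type*} [NormedAddCommGroup E] [InnerProductSpace ℝ E]
    (T s η e : ℕ) (hsη : s < η) (hηe : η < e) (heT : e ≤ T)
    (p : ℕ → E) (P₁ P₂ : E)
    (h1 : ∀ t, s < t → t ≤ η → p t = P₁)
    (h2 : ∀ t, η < t → t ≤ e → p t = P₂) :
    (∀ t₁ t₂, s < t₁ → t₁ ≤ t₂ → t₂ ≤ η →
      ‖cusum p s e t₁‖ ^ 2 ≤ ‖cusum p s e t₂‖ ^ 2) ∧
    (∀ t₁ t₂, η ≤ t₁ → t₁ ≤ t₂ → t₂ < e →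
      ‖cusum p s e t₂‖ ^ 2 ≤ ‖cusum p s e t₁‖ ^ 2) ∧
    (∀ t, s < t → t < e → ‖cusum p s e t‖ ≤ ‖cusum p s e η‖) :=
  cusum_maximized_at_change_point_general s η e hsη hηe p P₁ P₂ h1 h2
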